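/- arXiv:2008.07454 — 2 statements merged into one kernel-verified Lean document; each statement's English description precedes it below -/
import Mathlib

section
/- (Higher-order parameter shift formula, Eq. (12)) Let M ∈ ℕ and let C : (Fin M → ℝ) → ℝ be such that for every coordinate l and every point θ, the one-variable function t ↦ C(θ with l-th coordinate replaced by t) has the form a + b·cos t + c·sin t (with a, b, c depending on the other coordinates), and let N : Fin M → ℕ be multiplicities with total order |α| = Σ_l N(l). Then the mixed partial derivative ∂₁^{N(1)} ⋯ ∂_M^{N(M)} C(θ) exists and equals 2^{−|α|} · Σ_{ω} ( Π_{l} d(ω(l), N(l)) ) · C(θ + π·ω), where the sum runs over all functions ω assigning to each coordinate l a shift ω(l) in the support for N(l), and d are the Pascal-tree coefficients: d(0,0) = 1; d(±1/2,1) = ±1; for even N ≥ 2, d(0,N) = (−1)^{N/2}·2^{N−1}, d(±1,N) = (−1)^{(N−2)/2}·2^{N−2} with support {0,±1}; for odd N ≥ 3, d(±1/2,N) = ±(−1)^{(N−1)/2}·3·2^{N−3}, d(±3/2,N) = ∓(−1)^{(N−1)/2}·2^{N−3} with support {±1/2,±3/2}. -/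
/-!
Along the `l`-th axis `C` is `a + b cos t + c sin t`, whose `n`-th derivative is the phase shift
`b cos (t + nπ/2) + c sin (t + nπ/2)` (plus `a` when `n = 0`); the Pascal-tree coefficients
write this phase-shifted function as a combination of the translates `t ↦ C(t + πx)`,
`x ∈ pascalSupport n`.
Functions of trigonometric form along a fixed axis form a translation-invariant subspace, so
after differentiating along some axes the result, a linear combination of translates of `C`, is
still of trigonometric form along the remaining ones, and the one-variable rule applies axis by
axis.
-/

/-- The Pascal-tree coefficients `d(ω, N)`. -/
def pascalD (ω : ℚ) (N : ℕ) : ℤ :=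
  if N = 0 then (if ω = 0 then 1 else 0)
  else if N = 1 then (if ω = 1/2 then 1 else if ω = -1/2 then -1 else 0)
  else if N % 2 = 0 then
    (if ω = 0 then (-1) ^ (N / 2) * 2 ^ (N - 1)
     else if ω = 1 ∨ ω = -1 then (-1) ^ ((N - 2) / 2) * 2 ^ (N - 2)
     else 0)
  else
    (if ω = 1/2 then (-1) ^ ((N - 1) / 2) * 3 * 2 ^ (N - 3)
     else if ω = -1/2 then -((-1) ^ ((N - 1) / 2) * 3 * 2 ^ (N - 3))
     else if ω = 3/2 then -((-1) ^ ((N - 1) / 2) * 2 ^ (N - 3))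
     else if ω = -3/2 then (-1) ^ ((N - 1) / 2) * 2 ^ (N - 3)
     else 0)

/-- The support of the Pascal-tree coefficients at order `N`. -/
def pascalSupport (N : ℕ) : Finset ℚ :=
  if N = 0 then {0}
  else if N = 1 then {1/2, -1/2}
  else if N % 2 = 0 then {0, 1, -1}
  else {1/2, -1/2, 3/2, -3/2}

/-- Partial derivative of `C` with respect to the `i`-th coordinate. -/
noncomputable def pderiv' {M : ℕ} (i : Fin M) (C : (Fin M → ℝ) → ℝ) : (Fin M → ℝ) → ℝ :=
  fun θ => deriv (fun t => C (Function.update θ i t)) (θ i)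

/-- The iterated mixed partial derivative `∂₁^{N 1} ⋯ ∂_M^{N M} C`. -/
noncomputable def pdMulti {M : ℕ} (N : Fin M → ℕ) (C : (Fin M → ℝ) → ℝ) : (Fin M → ℝ) → ℝ :=
  (List.finRange M).foldr (fun i f => (pderiv' i)^[N i] f) C

open Real Function

lemma iterate_deriv_trig (a b c : ℝ) (n : ℕ) :
    deriv^[n] (fun t => a + b * cos t + c * sin t) =
      fun t => (if n = 0 then a else 0) + b * cos (t + n * (π / 2)) +
        c * sin (t + n * (π / 2)) := by
  induction n with
  | zero => simp
  | succ n ih =>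
    ext t
    have hshift : HasDerivAt (fun s : ℝ => s + n * (π / 2)) 1 t := (hasDerivAt_id t).add_const _
    have hderiv : HasDerivAt
        (fun s => (if n = 0 then a else 0) + b * cos (s + n * (π / 2)) + c * sin (s + n * (π / 2)))
        (b * -sin (t + n * (π / 2)) + c * cos (t + n * (π / 2))) t := by
      simpa [add_assoc] using ((((hasDerivAt_cos _).comp t hshift).const_mul b).add
        (((hasDerivAt_sin _).comp t hshift).const_mul c)).const_add (if n = 0 then a else 0)
    rw [iterate_succ_apply', ih, hderiv.deriv]
    push_cast
    rw [show t + (n + 1) * (π / 2) = t + n * (π / 2) + π / 2 by ring,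
      cos_add_pi_div_two, sin_add_pi_div_two]
    simp

lemma pascalSupport_even (m : ℕ) : pascalSupport (2 * m + 2) = {0, 1, -1} := by
  simp [pascalSupport]

lemma pascalSupport_odd (m : ℕ) : pascalSupport (2 * m + 3) = {1/2, -1/2, 3/2, -3/2} := by
  simp [pascalSupport]

lemma pascalD_even (m : ℕ) (x : ℚ) : pascalD x (2 * m + 2) =
    if x = 0 then (-1) ^ (m + 1) * 2 ^ (2 * m + 1)
    else if x = 1 ∨ x = -1 then (-1) ^ m * 2 ^ (2 * m) else 0 := by
  simp [pascalD]

lemma pascalD_odd (m : ℕ) (x : ℚ) : pascalD x (2 * m + 3) =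
    if x = 1/2 then (-1) ^ (m + 1) * 3 * 2 ^ (2 * m)
    else if x = -1/2 then -((-1) ^ (m + 1) * 3 * 2 ^ (2 * m))
    else if x = 3/2 then -((-1) ^ (m + 1) * 2 ^ (2 * m))
    else if x = -3/2 then (-1) ^ (m + 1) * 2 ^ (2 * m) else 0 := by
  simp [pascalD]

lemma iterate_deriv_eq_pascal_sum {f : ℝ → ℝ} {a b c : ℝ}
    (hf : ∀ t, f t = a + b * cos t + c * sin t) (n : ℕ) (t : ℝ) :
    deriv^[n] f t = 1 / 2 ^ n * ∑ x ∈ pascalSupport n, (pascalD x n : ℝ) * f (t + π * x) := by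
  obtain rfl : f = fun t => a + b * cos t + c * sin t := funext hf
  rw [iterate_deriv_trig]
  beta_reduce
  rcases n with _ | _ | n
  · simp [pascalSupport, pascalD]
  · have h₁ : t + π * ((1/2 : ℚ) : ℝ) = t + π / 2 := by push_cast; ring
    have h₂ : t + π * ((-1/2 : ℚ) : ℝ) = t - π / 2 := by push_cast; ring
    rw [show pascalSupport 1 = {1/2, -1/2} from rfl, Finset.sum_pair (by norm_num), h₁, h₂]
    norm_num [pascalD, cos_add_pi_div_two, sin_add_pi_div_two, cos_sub_pi_div_two,
      sin_sub_pi_div_two]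
    ring
  obtain ⟨m, rfl | rfl⟩ := Nat.even_or_odd' n
  · have h₀ : t + π * ((0 : ℚ) : ℝ) = t := by simp
    have h₁ : t + π * ((1 : ℚ) : ℝ) = t + π := by simp
    have h₂ : t + π * ((-1 : ℚ) : ℝ) = t - π := by push_cast; ring
    have h₃ : t + ((2 * m + 2 : ℕ) : ℝ) * (π / 2) = t + (m + 1 : ℕ) * π := by push_cast; ring
    rw [show 2 * m + 1 + 1 = 2 * m + 2 by ring, pascalSupport_even,
      Finset.sum_insert (by norm_num), Finset.sum_pair (by norm_num), h₀, h₁, h₂, h₃, cos_add_nat_mul_pi, sin_add_nat_mul_pi, cos_add_pi, sin_add_pi, cos_sub_pi,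
      sin_sub_pi]
    norm_num [pascalD_even]
    field_simp
    ring
  · have h₁ : t + π * ((1/2 : ℚ) : ℝ) = t + π / 2 := by push_cast; ring
    have h₂ : t + π * ((-1/2 : ℚ) : ℝ) = t - π / 2 := by push_cast; ring
    have h₃ : t + π * ((3/2 : ℚ) : ℝ) = t + π / 2 + π := by push_cast; ring
    have h₄ : t + π * ((-3/2 : ℚ) : ℝ) = t - π / 2 - π := by push_cast; ring
    have h₅ : t + ((2 * m + 3 : ℕ) : ℝ) * (π / 2) = t + π / 2 + (m + 1 : ℕ) * π := by
      push_cast; ring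
    rw [show 2 * m + 1 + 2 = 2 * m + 3 by ring, pascalSupport_odd, Finset.sum_insert (by norm_num),
      Finset.sum_insert (by norm_num), Finset.sum_pair (by norm_num), h₁, h₂, h₃, h₄, h₅,
      cos_add_nat_mul_pi, sin_add_nat_mul_pi, cos_add_pi, sin_add_pi, cos_sub_pi, sin_sub_pi,
      cos_add_pi_div_two, sin_add_pi_div_two, cos_sub_pi_div_two, sin_sub_pi_div_two]
    norm_num [pascalD_odd]
    field_simp
    ring

lemma iterate_pderiv'_eq_iterate_deriv {M : ℕ} (i : Fin M) (G : (Fin M → ℝ) → ℝ) (n : ℕ)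
    (θ : Fin M → ℝ) : (pderiv' i)^[n] G θ = deriv^[n] (fun t => G (update θ i t)) (θ i) := by
  suffices h : ∀ θ : Fin M → ℝ,
      (fun t => (pderiv' i)^[n] G (update θ i t)) = deriv^[n] (fun t => G (update θ i t)) by
    simpa using congrFun (h θ) (θ i)
  induction n with
  | zero => exact fun _ => rfl
  | succ n ih =>
    intro θ
    ext t
    rw [iterate_succ_apply', iterate_succ_apply', ← ih]
    simp [pderiv']

section Trig

variable {ι : Type*} [DecidableEq ι]

def trigIn (i : ι) : Submodule ℝ ((ι → ℝ) → ℝ) where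
  carrier := {G | ∀ θ, ∃ a b c : ℝ, ∀ t, G (update θ i t) = a + b * cos t + c * sin t}
  zero_mem' _ := ⟨0, 0, 0, by simp⟩
  add_mem' {F G} hF hG θ := by
    obtain ⟨a, b, c, hF⟩ := hF θ
    obtain ⟨a', b', c', hG⟩ := hG θ
    exact ⟨a + a', b + b', c + c', fun t => by simp only [Pi.add_apply, hF, hG]; ring⟩
  smul_mem' r {G} hG θ := by
    obtain ⟨a, b, c, hG⟩ := hG θ
    exact ⟨r * a, r * b, r * c, fun t => by simp only [Pi.smul_apply, smul_eq_mul, hG]; ring⟩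

lemma comp_add_mem_trigIn {i : ι} {G : (ι → ℝ) → ℝ} (hG : G ∈ trigIn i) (v : ι → ℝ) :
    (fun θ => G (θ + v)) ∈ trigIn i := by
  intro θ
  obtain ⟨a, b, c, hG⟩ := hG (θ + v)
  refine ⟨a, b * cos (v i) + c * sin (v i), c * cos (v i) - b * sin (v i), fun t => ?_⟩
  have hshift : update θ i t + v = update (θ + v) i (t + v i) := by
    ext l
    rcases eq_or_ne l i with rfl | hl <;> simp [*]
  simp only [hshift, hG, cos_add, sin_add]
  ring

end Trig

lemma iterate_pderiv'_eq_pascal_sum {M : ℕ} {i : Fin M} {G : (Fin M → ℝ) → ℝ}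
    (hG : G ∈ trigIn i) (n : ℕ) (θ : Fin M → ℝ) :
    (pderiv' i)^[n] G θ =
      1 / 2 ^ n * ∑ x ∈ pascalSupport n, (pascalD x n : ℝ) * G (update θ i (θ i + π * x)) := by
  obtain ⟨a, b, c, hG⟩ := hG θ
  exact (iterate_pderiv'_eq_iterate_deriv i G n θ).trans (iterate_deriv_eq_pascal_sum hG n (θ i))

section ShiftSum

variable {ι : Type*} [DecidableEq ι] [Fintype ι]

lemma sum_piFinset_update_of_eq_singleton {α β : Type*} [DecidableEq α] [AddCommMonoid β]
    (t : ι → Finset α) (i : ι) (s : Finset α) {a : α} (hti : t i = {a})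
    (F : (ι → α) → β) :
    ∑ ω ∈ Fintype.piFinset (update t i s), F ω =
      ∑ x ∈ s, ∑ ω ∈ Fintype.piFinset t, F (update ω i x) := by
  rw [← Finset.sum_product' (f := fun x ω => F (update ω i x))]
  refine Finset.sum_nbij' (fun ω => (ω i, update ω i a)) (fun p => update p.2 i p.1)
    ?_ ?_ ?_ ?_ (fun ω _ => by simp)
  · intro ω hω
    simp only [Finset.mem_product, Fintype.mem_piFinset] at hω ⊢
    refine ⟨by simpa using hω i, fun l => ?_⟩
    rcases eq_or_ne l i with rfl | hl
    · simp [hti]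
    · simpa [hl] using hω l
  · intro p hp
    simp only [Finset.mem_product, Fintype.mem_piFinset] at hp ⊢
    intro l
    rcases eq_or_ne l i with rfl | hl
    · simpa using hp.1
    · simpa [hl] using hp.2 l
  · intro ω _
    simp
  · intro p hp
    simp only [Finset.mem_product, Fintype.mem_piFinset] at hp
    have hpi : p.2 i = a := by simpa [hti] using hp.2 i
    simp [← hpi]

noncomputable def pascalShiftSum (N : ι → ℕ) (C : (ι → ℝ) → ℝ) (θ : ι → ℝ) : ℝ :=
  (1 / 2 ^ (∑ l, N l)) *
    ∑ ω ∈ Fintype.piFinset (fun l => pascalSupport (N l)),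
      (∏ l, (pascalD (ω l) (N l) : ℝ)) * C (θ + fun l => π * ((ω l : ℚ) : ℝ))

lemma pascalShiftSum_zero (C : (ι → ℝ) → ℝ) : pascalShiftSum 0 C = C := by
  ext θ
  have hsupp : (fun _ : ι => pascalSupport 0) = fun _ => {0} := rfl
  simp [pascalShiftSum, hsupp, Fintype.piFinset_singleton, pascalD, ← Pi.zero_def]

lemma pascalShiftSum_mem_trigIn {i : ι} {C : (ι → ℝ) → ℝ} (hC : C ∈ trigIn i) (N : ι → ℕ) :
    pascalShiftSum N C ∈ trigIn i := by
  have hsum : pascalShiftSum N C = (1 / 2 ^ (∑ l, N l) : ℝ) •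
      ∑ ω ∈ Fintype.piFinset (fun l => pascalSupport (N l)),
        (∏ l, (pascalD (ω l) (N l) : ℝ)) • fun θ => C (θ + fun l => π * ((ω l : ℚ) : ℝ)) := by
    ext θ
    simp [pascalShiftSum, Finset.sum_apply]
  rw [hsum]
  exact Submodule.smul_mem _ _
    (Submodule.sum_mem _ fun ω _ => Submodule.smul_mem _ _ (comp_add_mem_trigIn hC _))

lemma pascalShiftSum_update (N : ι → ℕ) {i : ι} (hi : N i = 0) (n : ℕ)
    (C : (ι → ℝ) → ℝ) (θ : ι → ℝ) :
    pascalShiftSum (update N i n) C θ =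
      1 / 2 ^ n * ∑ x ∈ pascalSupport n,
        (pascalD x n : ℝ) * pascalShiftSum N C (update θ i (θ i + π * x)) := by
  have hsupp : (fun l => pascalSupport (update N i n l)) =
      update (fun l => pascalSupport (N l)) i (pascalSupport n) :=
    funext fun l => apply_update (fun _ => pascalSupport) N i n l
  have hsupp_i : pascalSupport (N i) = {0} := by rw [hi]; rfl
  have hexp : ∑ l, update N i n l = n + ∑ l, N l := by
    rw [Finset.sum_update_of_mem (Finset.mem_univ i), Finset.sdiff_singleton_eq_erase,
      Finset.sum_erase (f := N) _ hi]
  unfold pascalShiftSum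
  rw [hsupp, sum_piFinset_update_of_eq_singleton _ i _ hsupp_i, hexp]
  simp only [Finset.mul_sum]
  refine Finset.sum_congr rfl fun x _ => Finset.sum_congr rfl fun ω hω => ?_
  have hωi : ω i = 0 := by simpa [hsupp_i] using Fintype.mem_piFinset.mp hω i
  have hprod : ∏ l, (pascalD (update ω i x l) (update N i n l) : ℝ) =
      pascalD x n * ∏ l, (pascalD (ω l) (N l) : ℝ) := by
    rw [funext fun l => apply_update₂ (fun _ y m => (pascalD y m : ℝ)) ω N i x n l,
      Finset.prod_update_of_mem (Finset.mem_univ i), Finset.sdiff_singleton_eq_erase,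
      Finset.prod_erase _ (by simp [hωi, hi, pascalD])]
  have harg : (θ + fun l => π * ((update ω i x l : ℚ) : ℝ)) =
      update θ i (θ i + π * x) + fun l => π * ((ω l : ℚ) : ℝ) := by
    ext l
    rcases eq_or_ne l i with rfl | hl <;> simp [*]
  rw [hprod, harg, pow_add]
  ring

end ShiftSum

lemma foldr_iterate_pderiv'_eq_pascalShiftSum {M : ℕ} {C : (Fin M → ℝ) → ℝ}
    (hC : ∀ l, C ∈ trigIn l) (N : Fin M → ℕ) {L : List (Fin M)} (hL : L.Nodup) :
    L.foldr (fun i f => (pderiv' i)^[N i] f) C =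
      pascalShiftSum (fun l => if l ∈ L then N l else 0) C := by
  induction L with
  | nil =>
    simp only [List.foldr_nil, List.not_mem_nil, if_false]
    exact (pascalShiftSum_zero C).symm
  | cons i L ih =>
    obtain ⟨hiL, hL⟩ := List.nodup_cons.mp hL
    have hN : (fun l => if l ∈ i :: L then N l else 0) =
        update (fun l => if l ∈ L then N l else 0) i (N i) := by
      ext l
      rcases eq_or_ne l i with rfl | hl <;> simp [*]
    ext θ
    rw [List.foldr_cons, ih hL, iterate_pderiv'_eq_pascal_sum (pascalShiftSum_mem_trigIn (hC i) _),
      hN, pascalShiftSum_update _ (by simp [hiL])]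

/-- Higher-order parameter shift formula (Eq. (12)): for a cost `C` of trigonometric form in
each coordinate and multiplicities `N`, the mixed partial derivative
`∂₁^{N(1)} ⋯ ∂_M^{N(M)} C(θ)` equals
`2^{−|α|} Σ_ω (Π_l d(ω(l), N(l))) C(θ + π ω)`, the sum running over all assignments `ω` of a
Pascal-tree shift to each coordinate. -/
theorem higher_order_parameter_shift {M : ℕ} (C : (Fin M → ℝ) → ℝ)
    (htrig : ∀ (l : Fin M) (θ : Fin M → ℝ), ∃ a b c : ℝ, ∀ t : ℝ,
      C (Function.update θ l t) = a + b * Real.cos t + c * Real.sin t)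
    (N : Fin M → ℕ) (θ : Fin M → ℝ) :
    pdMulti N C θ =
      (1 / 2 ^ (∑ l, N l)) *
        ∑ ω ∈ Fintype.piFinset (fun l => pascalSupport (N l)),
          (∏ l, (pascalD (ω l) (N l) : ℝ)) *
            C (θ + fun l => Real.pi * ((ω l : ℚ) : ℝ)) := by
  have h := foldr_iterate_pderiv'_eq_pascalShiftSum htrig N (List.nodup_finRange M)
  simp only [List.mem_finRange, if_true] at h
  exact congrFun h θ
end

section
/- (Proposition 2) Let p ∈ ℕ, let C : (Fin p → ℝ) → ℝ be such that for every coordinate l and every point θ, the one-variable function t ↦ C(θ with l-th coordinate replaced by t) has the form a + b·cos t + c·sin t. Let N : Fin p → ℕ be multiplicities with |α| = Σ_l N(l), let i be a coordinate, and let μ be a probability measure on (Fin p → ℝ) invariant under the translations θ ↦ θ + π·ω for every shift vector ω with ω(l) in the Pascal-tree support for N(l). Suppose g = ∂ᵢC is square-integrable with ∫ g dμ = 0 and variance V = ∫ g² dμ. Then for every c > 0, μ{ θ : |∂ᵢ( ∂₁^{N(1)} ⋯ ∂_p^{N(p)} C )(θ)| ≥ c } ≤ 2^{|α|} · V / c².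 -/
open MeasureTheory

/-!
The parameter-shift rule `∂ₗF(θ) = (F(θ + (π/2) eₗ) - F(θ - (π/2) eₗ)) / 2` holds for every `F`
that is a trigonometric polynomial of degree one in each coordinate, and this class is closed
under partial derivatives. Iterating it, `∂₁^{N(1)} ⋯ ∂_p^{N(p)} C` is a combination
`∑ₖ aₖ C(θ + π ωₖ)` with `∑ₖ |aₖ| ≤ 1` and every `ωₖ` on the Pascal-tree grid
`∏ₗ pascalSupport (N l)`, which has at most `2^{|α|}` points; `2π`-periodicity folds the shifts
`±2` back to `0`. Differentiating once more in `θᵢ` turns `C` into `g = ∂ᵢC`, so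
`|∂ᵢ∂^α C(θ)| ≥ c` forces `|g(θ + π ω)| ≥ c` at some grid point `ω`. A union bound over the grid,
the invariance of `μ` under the grid shifts and Chebyshev's inequality
`μ{|g| ≥ c} ≤ ∫ g² dμ / c²` conclude.
-/

open Function Finset Real

namespace ParameterShift

variable {p : ℕ}

def IsCoordTrig (f : (Fin p → ℝ) → ℝ) : Prop :=
  ∀ (l : Fin p) (θ : Fin p → ℝ), ∃ a b c : ℝ, ∀ t : ℝ,
    f (update θ l t) = a + b * cos t + c * sin t

theorem hasDerivAt_trig (a b c t : ℝ) :
    HasDerivAt (fun u => a + b * cos u + c * sin u) (-b * sin t + c * cos t) t :=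
  (((hasDerivAt_const t a).add ((hasDerivAt_cos t).const_mul b)).add
    ((hasDerivAt_sin t).const_mul c)).congr_deriv (by ring)

theorem pderiv'_eq_of_update_eq_trig {f : (Fin p → ℝ) → ℝ} {l : Fin p} {θ : Fin p → ℝ}
    {a b c : ℝ} (h : ∀ t, f (update θ l t) = a + b * cos t + c * sin t) :
    pderiv' l f θ = -b * sin (θ l) + c * cos (θ l) := by
  rw [pderiv', funext h]
  exact (hasDerivAt_trig a b c _).deriv

namespace IsCoordTrig

variable {f : (Fin p → ℝ) → ℝ}

theorem differentiable_update (hf : IsCoordTrig f) (l : Fin p) (θ : Fin p → ℝ) :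
    Differentiable ℝ fun t => f (update θ l t) := by
  obtain ⟨a, b, c, h⟩ := hf l θ
  rw [funext h]
  fun_prop

theorem pderiv'_eq_parameter_shift (hf : IsCoordTrig f) (l : Fin p) (θ : Fin p → ℝ) :
    pderiv' l f θ =
      (f (update θ l (θ l + π / 2)) - f (update θ l (θ l - π / 2))) / 2 := by
  obtain ⟨a, b, c, h⟩ := hf l θ
  rw [pderiv'_eq_of_update_eq_trig h, h, h]
  simp only [cos_add_pi_div_two, sin_add_pi_div_two, cos_sub_pi_div_two, sin_sub_pi_div_two]
  ring

theorem update_add_int_mul_two_pi (hf : IsCoordTrig f) (l : Fin p) (θ : Fin p → ℝ) (t : ℝ)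
    (n : ℤ) : f (update θ l (t + n * (2 * π))) = f (update θ l t) := by
  obtain ⟨a, b, c, h⟩ := hf l θ
  rw [h, h, cos_add_int_mul_two_pi, sin_add_int_mul_two_pi]

end IsCoordTrig

theorem isCoordTrig_pderiv' {f : (Fin p → ℝ) → ℝ} (hf : IsCoordTrig f) (l : Fin p) :
    IsCoordTrig (pderiv' l f) := by
  intro k θ
  by_cases hkl : k = l
  · subst hkl
    obtain ⟨a, b, c, h⟩ := hf k θ
    refine ⟨0, c, -b, fun t => ?_⟩
    rw [pderiv'_eq_of_update_eq_trig (a := a) (b := b) (c := c)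
      (by simpa only [update_idem] using h), update_self]
    ring
  · have hcomm (s t : ℝ) : update (update θ k t) l s = update (update θ l s) k t :=
      (update_comm (Ne.symm hkl) _ _ _).symm
    obtain ⟨a₁, b₁, c₁, h₁⟩ := hf k (update θ l (θ l + π / 2))
    obtain ⟨a₂, b₂, c₂, h₂⟩ := hf k (update θ l (θ l - π / 2))
    refine ⟨(a₁ - a₂) / 2, (b₁ - b₂) / 2, (c₁ - c₂) / 2, fun t => ?_⟩
    rw [hf.pderiv'_eq_parameter_shift, update_of_ne (Ne.symm hkl), hcomm, hcomm, h₁, h₂]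
    ring

theorem isCoordTrig_iterate_pderiv' {f : (Fin p → ℝ) → ℝ} (hf : IsCoordTrig f) (l : Fin p)
    (n : ℕ) : IsCoordTrig ((pderiv' l)^[n] f) := by
  induction n with
  | zero => exact hf
  | succ n ih => rw [iterate_succ_apply']; exact isCoordTrig_pderiv' ih l

theorem isCoordTrig_foldr {C : (Fin p → ℝ) → ℝ} (hC : IsCoordTrig C) (N : Fin p → ℕ)
    (ls : List (Fin p)) : IsCoordTrig (ls.foldr (fun i f => (pderiv' i)^[N i] f) C) := by
  induction ls with
  | nil => exact hC
  | cons l ls ih => exact isCoordTrig_iterate_pderiv' ih l (N l)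

noncomputable def shiftVec (ω : Fin p → ℚ) : Fin p → ℝ := fun l => π * ω l

theorem add_shiftVec_update (θ : Fin p → ℝ) (ω : Fin p → ℚ) (l : Fin p) (q : ℚ) :
    θ + shiftVec (update ω l q) = update (θ + shiftVec ω) l (θ l + π * q) := by
  ext k
  by_cases hk : k = l
  · subst hk; simp [shiftVec]
  · simp [shiftVec, hk]

def wrap (q : ℚ) : ℚ := if q = 2 ∨ q = -2 then 0 else q

theorem exists_eq_wrap_add_int_mul_two (q : ℚ) : ∃ n : ℤ, q = wrap q + n * 2 := by
  unfold wrap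
  split_ifs with h
  · rcases h with rfl | rfl
    exacts [⟨1, by norm_num⟩, ⟨-1, by norm_num⟩]
  · exact ⟨0, by simp⟩

theorem IsCoordTrig.apply_update_add_shiftVec {f : (Fin p → ℝ) → ℝ} (hf : IsCoordTrig f)
    (θ : Fin p → ℝ) (ω : Fin p → ℚ) (l : Fin p) (σ : ℚ) :
    f (update θ l (θ l + π * σ) + shiftVec ω) =
      f (θ + shiftVec (update ω l (wrap (ω l + σ)))) := by
  obtain ⟨n, hn⟩ := exists_eq_wrap_add_int_mul_two (ω l + σ)
  have hθ : update θ l (θ l + π * σ) + shiftVec ω =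
      update (θ + shiftVec ω) l (θ l + π * (wrap (ω l + σ) : ℚ) + n * (2 * π)) := by
    ext k
    by_cases hk : k = l
    · subst hk
      have hn' : ((ω k + σ : ℚ) : ℝ) = wrap (ω k + σ) + n * 2 := by exact_mod_cast hn
      push_cast at hn'
      simp only [Pi.add_apply, update_self, shiftVec]
      linear_combination π * hn'
    · simp [shiftVec, hk]
  rw [hθ, hf.update_add_int_mul_two_pi, add_shiftVec_update]

theorem pascalSupport_add_two (m : ℕ) : pascalSupport (m + 2) = pascalSupport (m % 2 + 2) := by
  simp [pascalSupport]

theorem wrap_mem_pascalSupport_succ {m : ℕ} {q : ℚ} (hq : q ∈ pascalSupport m) :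
    wrap (q + 1 / 2) ∈ pascalSupport (m + 1) ∧ wrap (q - 1 / 2) ∈ pascalSupport (m + 1) := by
  obtain rfl | rfl | ⟨k, rfl⟩ : m = 0 ∨ m = 1 ∨ ∃ k, m = k + 2 := by
    rcases m with _ | _ | k <;> simp
  · simp only [pascalSupport, if_pos, Finset.mem_singleton] at hq
    subst hq
    norm_num [pascalSupport, wrap]
  · simp [pascalSupport] at hq
    rcases hq with rfl | rfl <;> norm_num [pascalSupport, wrap]
  · rw [show k + 2 + 1 = (k + 1) + 2 by ring, pascalSupport_add_two] at *
    rcases Nat.mod_two_eq_zero_or_one k with hk | hk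
    · rw [hk] at hq
      rw [Nat.succ_mod_two_eq_one_iff.mpr hk]
      simp [pascalSupport] at hq
      rcases hq with rfl | rfl | rfl <;> norm_num [pascalSupport, wrap]
    · rw [hk] at hq
      rw [Nat.succ_mod_two_eq_zero_iff.mpr hk]
      simp [pascalSupport] at hq
      rcases hq with rfl | rfl | rfl | rfl <;> norm_num [pascalSupport, wrap]

theorem card_pascalSupport_le (n : ℕ) : #(pascalSupport n) ≤ 2 ^ n := by
  obtain rfl | rfl | ⟨k, rfl⟩ : n = 0 ∨ n = 1 ∨ ∃ k, n = k + 2 := by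
    rcases n with _ | _ | k <;> simp
  · simp [pascalSupport]
  · exact card_le_two
  · calc #(pascalSupport (k + 2)) ≤ 4 := by
          rw [pascalSupport_add_two]
          rcases Nat.mod_two_eq_zero_or_one k with hk | hk <;> simp only [hk, pascalSupport] <;>
            norm_num
      _ = 2 ^ 2 := by norm_num
      _ ≤ 2 ^ (k + 2) := Nat.pow_le_pow_right two_pos (by omega)

def pascalShifts (M : Fin p → ℕ) : Finset (Fin p → ℚ) :=
  Fintype.piFinset fun l => pascalSupport (M l)

theorem card_pascalShifts_le (M : Fin p → ℕ) : #(pascalShifts M) ≤ 2 ^ ∑ l, M l := by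
  rw [pascalShifts, Fintype.card_piFinset, ← prod_pow_eq_pow_sum]
  exact prod_le_prod' fun l _ => card_pascalSupport_le (M l)

theorem update_wrap_mem_pascalShifts {M : Fin p → ℕ} {l : Fin p} {m : ℕ} {ω : Fin p → ℚ}
    (hω : ω ∈ pascalShifts (update M l m)) :
    update ω l (wrap (ω l + 1 / 2)) ∈ pascalShifts (update M l (m + 1)) ∧
      update ω l (wrap (ω l - 1 / 2)) ∈ pascalShifts (update M l (m + 1)) := by
  simp only [pascalShifts, Fintype.mem_piFinset] at hω ⊢
  have hupdate {q : ℚ} (hq : q ∈ pascalSupport (m + 1)) (k : Fin p) :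
      update ω l q k ∈ pascalSupport (update M l (m + 1) k) := by
    by_cases hk : k = l
    · subst hk; simpa using hq
    · simpa [hk] using hω k
  have hωl := wrap_mem_pascalSupport_succ (by simpa using hω l)
  exact ⟨hupdate hωl.1, hupdate hωl.2⟩

def IsShiftComb (C F : (Fin p → ℝ) → ℝ) (S : Set (Fin p → ℚ)) : Prop :=
  ∃ (n : ℕ) (a : Fin n → ℝ) (ω : Fin n → Fin p → ℚ), ∑ k, |a k| ≤ 1 ∧ (∀ k, ω k ∈ S) ∧
    ∀ θ, F θ = ∑ k, a k * C (θ + shiftVec (ω k))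

variable {C F : (Fin p → ℝ) → ℝ} {S : Set (Fin p → ℚ)}

theorem isShiftComb_self (h0 : 0 ∈ S) : IsShiftComb C C S :=
  ⟨1, fun _ => 1, fun _ => 0, by simp, fun _ => h0, fun θ => by
    simp [show shiftVec (0 : Fin p → ℚ) = 0 from funext fun _ => by simp [shiftVec]]⟩

theorem isShiftComb_pderiv' (hC : IsCoordTrig C) (hF : IsCoordTrig F) (h : IsShiftComb C F S)
    {l : Fin p} {T : Set (Fin p → ℚ)}
    (hST : ∀ ω ∈ S, update ω l (wrap (ω l + 1 / 2)) ∈ T ∧ update ω l (wrap (ω l - 1 / 2)) ∈ T) :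
    IsShiftComb C (pderiv' l F) T := by
  obtain ⟨n, a, ω, ha, hω, hFω⟩ := h
  refine ⟨n + n, Fin.append (fun k => a k / 2) (fun k => -(a k / 2)),
    Fin.append (fun k => update (ω k) l (wrap (ω k l + 1 / 2)))
      (fun k => update (ω k) l (wrap (ω k l - 1 / 2))), ?_, ?_, fun θ => ?_⟩
  · simp only [Fin.sum_univ_add, Fin.append_left, Fin.append_right, abs_neg, abs_div,
      abs_two, ← sum_div]
    linarith
  · exact Fin.addCases (fun k => by simpa only [Fin.append_left] using (hST _ (hω k)).1)
      (fun k => by simpa only [Fin.append_right] using (hST _ (hω k)).2)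
  · have hplus : θ l + π / 2 = θ l + π * ((1 / 2 : ℚ) : ℝ) := by push_cast; ring
    have hminus : θ l - π / 2 = θ l + π * ((-(1 / 2) : ℚ) : ℝ) := by push_cast; ring
    simp only [hF.pderiv'_eq_parameter_shift, hFω, hplus, hminus, hC.apply_update_add_shiftVec,
      Fin.sum_univ_add, Fin.append_left, Fin.append_right, ← sub_eq_add_neg]
    rw [sub_div, sum_div, sum_div, sub_eq_add_neg, ← sum_neg_distrib]
    congr 1 <;> exact sum_congr rfl fun k _ => by ring

theorem isShiftComb_iterate_pderiv' (hC : IsCoordTrig C) (hF : IsCoordTrig F) (l : Fin p)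
    {M : Fin p → ℕ} (h : IsShiftComb C F ↑(pascalShifts M)) (n : ℕ) :
    IsShiftComb C ((pderiv' l)^[n] F) ↑(pascalShifts (update M l (M l + n))) := by
  induction n with
  | zero => simpa using h
  | succ n ih =>
    rw [iterate_succ_apply', ← add_assoc]
    refine isShiftComb_pderiv' hC (isCoordTrig_iterate_pderiv' hF l n) ih fun ω hω => ?_
    exact update_wrap_mem_pascalShifts hω

theorem isShiftComb_foldr (hC : IsCoordTrig C) (N : Fin p → ℕ) (ls : List (Fin p)) :
    IsShiftComb C (ls.foldr (fun i f => (pderiv' i)^[N i] f) C)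
      ↑(pascalShifts fun k => ls.count k * N k) := by
  induction ls with
  | nil => exact isShiftComb_self (Fintype.mem_piFinset.2 fun k => by simp [pascalSupport])
  | cons l ls ih =>
    have hM : (fun k => (l :: ls).count k * N k) =
        update (fun k => ls.count k * N k) l (ls.count l * N l + N l) := by
      ext k
      by_cases hk : k = l
      · subst hk; simp [add_mul]
      · simp [hk, Ne.symm hk]
    rw [List.foldr_cons, hM]
    exact isShiftComb_iterate_pderiv' hC (isCoordTrig_foldr hC N ls) l ih (N l)

theorem isShiftComb_pdMulti (hC : IsCoordTrig C) (N : Fin p → ℕ) :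
    IsShiftComb C (pdMulti N C) ↑(pascalShifts N) := by
  have h := isShiftComb_foldr hC N (List.finRange p)
  simp only [List.count_finRange, one_mul] at h
  exact h

theorem IsShiftComb.map_pderiv' (hC : IsCoordTrig C) (h : IsShiftComb C F S) (i : Fin p) :
    IsShiftComb (pderiv' i C) (pderiv' i F) S := by
  obtain ⟨n, a, ω, ha, hω, hFω⟩ := h
  refine ⟨n, a, ω, ha, hω, fun θ => ?_⟩
  have htrans (v : Fin p → ℝ) (t : ℝ) : update θ i t + v = update (θ + v) i (t + v i) := by
    ext k
    by_cases hk : k = i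
    · subst hk; simp
    · simp [hk]
  simp only [pderiv', hFω, htrans]
  refine (HasDerivAt.fun_sum fun k _ => ?_).deriv
  exact (HasDerivAt.comp_add_const _ _
    (hC.differentiable_update i _ _).hasDerivAt).const_mul (a k)

theorem IsShiftComb.exists_le_abs {g : (Fin p → ℝ) → ℝ} (h : IsShiftComb g F S) {c : ℝ}
    (hc : 0 < c) {θ : Fin p → ℝ} (hθ : c ≤ |F θ|) : ∃ ω ∈ S, c ≤ |g (θ + shiftVec ω)| := by
  obtain ⟨n, a, ω, ha, hω, hFω⟩ := h
  rcases (univ : Finset (Fin n)).eq_empty_or_nonempty with hn | hn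
  · simp [hFω, hn] at hθ
    linarith
  obtain ⟨k, -, hk⟩ := exists_max_image univ (fun k => |g (θ + shiftVec (ω k))|) hn
  refine ⟨ω k, hω k, hθ.trans ?_⟩
  calc |F θ| ≤ ∑ j, |a j| * |g (θ + shiftVec (ω j))| := by
        simpa only [hFω, abs_mul] using
          abs_sum_le_sum_abs (fun j => a j * g (θ + shiftVec (ω j))) univ
    _ ≤ ∑ j, |a j| * |g (θ + shiftVec (ω k))| :=
        sum_le_sum fun j _ => mul_le_mul_of_nonneg_left (hk j (mem_univ j)) (abs_nonneg _)
    _ ≤ |g (θ + shiftVec (ω k))| := by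
        rw [← sum_mul]
        exact mul_le_of_le_one_left (abs_nonneg _) ha

end ParameterShift

open ParameterShift

theorem meas_abs_ge_le_integral_sq_div_sq {α : Type*} [MeasurableSpace α] {μ : Measure α}
    {g : α → ℝ} (hg : MemLp g 2 μ) {c : ℝ} (hc : 0 < c) :
    μ {x | c ≤ |g x|} ≤ ENNReal.ofReal ((∫ x, g x ^ 2 ∂μ) / c ^ 2) := by
  have hset : {x | c ≤ |g x|} = {x | ENNReal.ofReal (c ^ 2) ≤ ENNReal.ofReal (g x ^ 2)} := by
    ext x
    simp [ENNReal.ofReal_le_ofReal_iff (sq_nonneg _), sq_le_sq, abs_of_pos hc]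
  rw [hset, ENNReal.ofReal_div_of_pos (by positivity),
    ofReal_integral_eq_lintegral_ofReal hg.integrable_sq (ae_of_all _ fun x => sq_nonneg _)]
  exact meas_ge_le_lintegral_div (hg.1.aemeasurable.pow_const 2).ennreal_ofReal
    (by positivity) ENNReal.ofReal_ne_top

theorem prop2_higher_order_chebyshev_general {p : ℕ} (C : (Fin p → ℝ) → ℝ)
    (htrig : ∀ (l : Fin p) (θ : Fin p → ℝ), ∃ a b c : ℝ, ∀ t : ℝ,
      C (Function.update θ l t) = a + b * Real.cos t + c * Real.sin t)
    (N : Fin p → ℕ) (i : Fin p)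
    (μ : Measure (Fin p → ℝ))
    (hμ : ∀ ω ∈ Fintype.piFinset (fun l => pascalSupport (N l)),
      MeasurePreserving (fun θ : Fin p → ℝ => θ + fun l => Real.pi * ((ω l : ℚ) : ℝ)) μ μ)
    (g : (Fin p → ℝ) → ℝ) (hg : g = pderiv' i C)
    (hL2 : MemLp g 2 μ)
    (V : ℝ) (hV : V = ∫ θ, (g θ) ^ 2 ∂μ)
    (c : ℝ) (hc : 0 < c) :
    μ {θ | c ≤ |pderiv' i (pdMulti N C) θ|} ≤
      ENNReal.ofReal (2 ^ (∑ l, N l) * V / c ^ 2) := by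
  set E := {θ | c ≤ |g θ|}
  have hrep : IsShiftComb g (pderiv' i (pdMulti N C)) ↑(pascalShifts N) :=
    hg ▸ (isShiftComb_pdMulti htrig N).map_pderiv' htrig i
  have hE : NullMeasurableSet E μ :=
    nullMeasurableSet_le aemeasurable_const hL2.1.aemeasurable.norm
  calc μ {θ | c ≤ |pderiv' i (pdMulti N C) θ|}
      ≤ μ (⋃ ω ∈ pascalShifts N, (· + shiftVec ω) ⁻¹' E) := measure_mono fun θ hθ => by
        obtain ⟨ω, hω, hθω⟩ := hrep.exists_le_abs hc hθ
        exact Set.mem_biUnion hω hθω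
    _ ≤ ∑ ω ∈ pascalShifts N, μ ((· + shiftVec ω) ⁻¹' E) := measure_biUnion_finset_le _ _
    _ = ∑ ω ∈ pascalShifts N, μ E := sum_congr rfl fun ω hω => (hμ ω hω).measure_preimage hE
    _ ≤ 2 ^ (∑ l, N l) * ENNReal.ofReal (V / c ^ 2) := by
        rw [sum_const, nsmul_eq_mul, hV]
        gcongr
        · exact_mod_cast card_pascalShifts_le N
        · exact meas_abs_ge_le_integral_sq_div_sq hL2 hc
    _ = ENNReal.ofReal (2 ^ (∑ l, N l) * V / c ^ 2) := by
        rw [mul_div_assoc, ENNReal.ofReal_mul (by positivity), ENNReal.ofReal_pow zero_le_two,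
          ENNReal.ofReal_ofNat]

/-- Proposition 2: for a cost `C` of trigonometric form in each coordinate, multiplicities `N`
with `|α| = Σ N(l)`, a coordinate `i`, and a probability measure `μ` invariant under all the
Pascal-tree parameter shifts, if `g = ∂ᵢC` is square-integrable with mean zero and variance
`V`, then for every `c > 0`,
`μ{θ : |∂ᵢ(∂₁^{N(1)} ⋯ ∂_p^{N(p)} C)(θ)| ≥ c} ≤ 2^{|α|} V / c²`. -/
theorem prop2_higher_order_chebyshev {p : ℕ} (C : (Fin p → ℝ) → ℝ)
    (htrig : ∀ (l : Fin p) (θ : Fin p → ℝ), ∃ a b c : ℝ, ∀ t : ℝ,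
      C (Function.update θ l t) = a + b * Real.cos t + c * Real.sin t)
    (N : Fin p → ℕ) (i : Fin p)
    (μ : Measure (Fin p → ℝ)) [IsProbabilityMeasure μ]
    (hμ : ∀ ω ∈ Fintype.piFinset (fun l => pascalSupport (N l)),
      MeasurePreserving (fun θ : Fin p → ℝ => θ + fun l => Real.pi * ((ω l : ℚ) : ℝ)) μ μ)
    (g : (Fin p → ℝ) → ℝ) (hg : g = pderiv' i C)
    (hL2 : MemLp g 2 μ) (hmean : ∫ θ, g θ ∂μ = 0)
    (V : ℝ) (hV : V = ∫ θ, (g θ) ^ 2 ∂μ)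
    (c : ℝ) (hc : 0 < c) :
    μ {θ | c ≤ |pderiv' i (pdMulti N C) θ|} ≤
      ENNReal.ofReal (2 ^ (∑ l, N l) * V / c ^ 2) :=
  prop2_higher_order_chebyshev_general C htrig N i μ hμ g hg hL2 V hV c hc
end
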